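/- Let x be a complex n×n matrix and λ an eigenvalue of x with |λ| = ρ(x). Let y be a matrix with ρ(y) ≤ |λ| and ρ(y + λI) = 2|λ|. Then λ is an eigenvalue of y. -/

import Mathlib

/-!
Pick `β ∈ σ(y + λI)` with `‖β‖ = ρ(y + λI) = 2‖λ‖`; then `β = α + λ` for some `α ∈ σ(y)`, and
`‖α‖ ≤ ρ(y) ≤ ‖λ‖`. Equality `‖α + λ‖ = 2‖λ‖` forces equality in the triangle inequality with
`‖α‖ = ‖λ‖`, and in the strictly convex space `ℂ` this means `α = λ`.
-/

noncomputable def specRad (n : ℕ) (x : Matrix (Fin n) (Fin n) ℂ) : ℝ :=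
  sSup ((fun z : ℂ => ‖z‖) '' spectrum ℂ x)

theorem eq_of_norm_le_of_norm_add_eq_two_mul {E : Type*} [NormedAddCommGroup E]
    [NormedSpace ℝ E] [StrictConvexSpace ℝ E] {a b : E} (hle : ‖a‖ ≤ ‖b‖)
    (hadd : ‖a + b‖ = 2 * ‖b‖) : a = b := by
  have hnorm : ‖a‖ = ‖b‖ := le_antisymm hle (by linarith [norm_add_le a b])
  exact eq_of_norm_eq_of_norm_add_eq hnorm (by rw [hadd, hnorm, two_mul])

section specRad

variable {n : ℕ}

theorem norm_le_specRad {x : Matrix (Fin n) (Fin n) ℂ} {α : ℂ} (hα : α ∈ spectrum ℂ x) :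
    ‖α‖ ≤ specRad n x :=
  le_csSup ((Matrix.finite_spectrum x).image _).bddAbove ⟨α, hα, rfl⟩

theorem exists_mem_spectrum_norm_eq_specRad [Nonempty (Fin n)]
    (x : Matrix (Fin n) (Fin n) ℂ) : ∃ β ∈ spectrum ℂ x, ‖β‖ = specRad n x :=
  ((spectrum.nonempty_of_isAlgClosed_of_finiteDimensional ℂ x).image _).csSup_mem
    ((Matrix.finite_spectrum x).image _)

end specRad

theorem stmt_11_general (n : ℕ) (x y : Matrix (Fin n) (Fin n) ℂ) (lam : ℂ)
    (hlam : lam ∈ spectrum ℂ x)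
    (hy : specRad n y ≤ ‖lam‖)
    (hsum : specRad n (y + lam • (1 : Matrix (Fin n) (Fin n) ℂ)) = 2 * ‖lam‖) :
    lam ∈ spectrum ℂ y := by
  -- for `n = 0` the matrix ring is trivial and every spectrum is empty
  have : Nonempty (Fin n) := by
    by_contra h
    have : IsEmpty (Fin n) := not_nonempty_iff.mp h
    simp [spectrum.of_subsingleton] at hlam
  obtain ⟨β, hβ, hβnorm⟩ := exists_mem_spectrum_norm_eq_specRad (y + lam • 1)
  rw [add_comm, ← Algebra.algebraMap_eq_smul_one, ← spectrum.singleton_add_eq] at hβ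
  obtain ⟨c, hc, α, hα, rfl⟩ := Set.mem_add.mp hβ
  rw [Set.mem_singleton_iff.mp hc] at hβnorm
  have hαlam : α = lam :=
    eq_of_norm_le_of_norm_add_eq_two_mul ((norm_le_specRad hα).trans hy)
      (by rw [add_comm, hβnorm, hsum])
  exact hαlam ▸ hα

theorem stmt_11 (n : ℕ) (x y : Matrix (Fin n) (Fin n) ℂ) (lam : ℂ)
    (hlam : lam ∈ spectrum ℂ x) (hmax : ‖lam‖ = specRad n x)
    (hy : specRad n y ≤ ‖lam‖)
    (hsum : specRad n (y + lam • (1 : Matrix (Fin n) (Fin n) ℂ)) = 2 * ‖lam‖) :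
    lam ∈ spectrum ℂ y :=
  stmt_11_general n x y lam hlam hy hsum
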